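/- arXiv:1305.2587 — 6 statements merged into one kernel-verified Lean document; each statement's English description precedes it below -/
import Mathlib

section
/- Let h, ψ : [0,∞) → ℝ be continuous functions, and suppose (φ, η) is a pair of continuous functions solving the Skorohod problem for ψ on the time-varying domain (−∞, h(·)], with η(0) = max(ψ(0) − h(0), 0). Then necessarily η(t) = sup_{s∈[0,t]} max(ψ(s) − h(s), 0) and φ(t) = ψ(t) − η(t) for all t ≥ 0; in particular the solution of the Skorohod problem is unique. -/
/-!
The lower bound is immediate: `φ ≤ h` and `η ≥ 0` give `η ≥ (ψ - h)⁺`, and `η` is nondecreasing.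
For the upper bound let `M = sup_{[0,t]} (ψ - h)⁺` and suppose `η t > M`. After the last time
`s₀ ≤ t` with `η s₀ ≤ M` we have `η > M ≥ ψ - h`, i.e. `φ < h`, so `η` is constant on `(s₀, t]`;
by continuity `η s₀ = η t > M`, a contradiction.
-/

open Set

section LastTime

variable {α β : Type*} [ConditionallyCompleteLinearOrder α] [TopologicalSpace α] [OrderTopology α]
  [LinearOrder β] [TopologicalSpace β] [OrderClosedTopology β]

theorem ContinuousOn.exists_lastTime_le {g : α → β} {a b : α} {c : β}
    (hg : ContinuousOn g (Icc a b)) (hab : a ≤ b) (ha : g a ≤ c) (hb : c < g b) :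
    ∃ s ∈ Ico a b, g s ≤ c ∧ ∀ u ∈ Ioc s b, c < g u := by
  have hclosed : IsClosed (Icc a b ∩ g ⁻¹' Iic c) :=
    hg.preimage_isClosed_of_isClosed isClosed_Icc isClosed_Iic
  obtain ⟨s, ⟨hs, hsc⟩, hmax⟩ :=
    (isCompact_Icc.of_isClosed_subset hclosed inter_subset_left).exists_isGreatest
      ⟨a, ⟨left_mem_Icc.2 hab, ha⟩⟩
  have hsb : s ≠ b := by rintro rfl; exact (not_le.2 hb) hsc
  refine ⟨s, ⟨hs.1, lt_of_le_of_ne hs.2 hsb⟩, hsc, fun u hu => not_le.1 fun hgu => ?_⟩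
  exact not_le.2 hu.1 (hmax ⟨⟨hs.1.trans hu.1.le, hu.2⟩, hgu⟩)

variable [DenselyOrdered α]

theorem ContinuousWithinAt.eq_of_const_on_Ioc {g : α → β} {a b : α} {y : β}
    (hg : ContinuousWithinAt g (Ioc a b) a) (hab : a < b) (hconst : ∀ u ∈ Ioc a b, g u = y) :
    g a = y := by
  have hmem : a ∈ closure (Ioc a b) := by
    rw [closure_Ioc hab.ne]
    exact left_mem_Icc.2 hab.le
  simpa using hg.mem_closure hmem (fun u hu => mem_singleton_iff.2 (hconst u hu))

-- With `g = ψ - h`, the condition `g < η` is `φ < h`: this is the minimality of the regulator.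
theorem le_of_flat_above {g η : α → β} {a b : α} {c : β} (hab : a ≤ b)
    (hη : ContinuousOn η (Icc a b))
    (hflat : ∀ s ∈ Icc a b, (∀ u ∈ Icc s b, g u < η u) → η s = η b)
    (ha : η a ≤ c) (hg : ∀ s ∈ Icc a b, g s ≤ c) : η b ≤ c := by
  by_contra! hb
  obtain ⟨s₀, hs₀, hs₀c, habove⟩ := hη.exists_lastTime_le hab ha hb
  have hs₀b : Icc s₀ b ⊆ Icc a b := Icc_subset_Icc_left hs₀.1
  have hconst : ∀ s ∈ Ioc s₀ b, η s = η b := fun s hs =>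
    hflat s (hs₀b (Ioc_subset_Icc_self hs)) fun u hu =>
      (hg u (hs₀b ⟨hs.1.le.trans hu.1, hu.2⟩)).trans_lt (habove u ⟨hs.1.trans_le hu.1, hu.2⟩)
  have hcont : ContinuousWithinAt η (Ioc s₀ b) s₀ :=
    (hη s₀ ⟨hs₀.1, hs₀.2.le⟩).mono (Ioc_subset_Icc_self.trans hs₀b)
  exact (not_le.2 hb) (hcont.eq_of_const_on_Ioc hs₀.2 hconst ▸ hs₀c)

end LastTime

theorem skorohod_problem_uniqueness_general
    (h ψ φ η : ℝ → ℝ)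
    (hh : ContinuousOn h (Set.Ici 0))
    (hψ : ContinuousOn ψ (Set.Ici 0))
    (hηc : ContinuousOn η (Set.Ici 0))
    -- (1) φ = ψ − η
    (h1 : ∀ t, 0 ≤ t → φ t = ψ t - η t)
    -- (2) φ ≤ h
    (h2 : ∀ t, 0 ≤ t → φ t ≤ h t)
    -- (3) η is non-negative, non-decreasing and flat off the boundary
    (h3a : ∀ t, 0 ≤ t → 0 ≤ η t)
    (h3b : ∀ s t, 0 ≤ s → s ≤ t → η s ≤ η t)
    (h3c : ∀ s t, 0 ≤ s → s ≤ t → (∀ u ∈ Set.Icc s t, φ u < h u) → η s = η t)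
    -- initial condition
    (h0 : η 0 = max (ψ 0 - h 0) 0) :
    ∀ t, 0 ≤ t →
      η t = sSup ((fun s => max (ψ s - h s) 0) '' Set.Icc 0 t) ∧
      φ t = ψ t - η t := by
  intro t ht
  set f : ℝ → ℝ := fun s => max (ψ s - h s) 0
  have hsub : Icc (0 : ℝ) t ⊆ Ici 0 := Icc_subset_Ici_self
  have hbdd : BddAbove (f '' Icc 0 t) := isCompact_Icc.bddAbove_image
    (((hψ.mono hsub).sub (hh.mono hsub)).sup continuousOn_const)
  have hf_le_sSup : ∀ s ∈ Icc 0 t, f s ≤ sSup (f '' Icc 0 t) := fun s hs =>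
    le_csSup hbdd (mem_image_of_mem f hs)
  have hf_le_η : ∀ s ∈ Icc 0 t, f s ≤ η s := fun s hs =>
    max_le (by linarith [h1 s hs.1, h2 s hs.1]) (h3a s hs.1)
  refine ⟨le_antisymm ?_ ?_, h1 t ht⟩
  · refine le_of_flat_above (g := fun s => ψ s - h s) ht (hηc.mono hsub) (fun s hs hbelow => ?_)
      (h0 ▸ hf_le_sSup 0 (left_mem_Icc.2 ht))
      (fun s hs => (le_max_left _ _).trans (hf_le_sSup s hs))
    exact h3c s t hs.1 hs.2 fun u hu => by linarith [h1 u (hs.1.trans hu.1), hbelow u hu]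
  · exact csSup_le ((nonempty_Icc.2 ht).image f)
      (forall_mem_image.2 fun s hs => (hf_le_η s hs).trans (h3b s t hs.1 hs.2))

/-- Uniqueness for the Skorohod problem on the time-varying domain `(−∞, h(·)]`:
any continuous solution `(φ, η)` with `η(0) = (ψ(0) − h(0))⁺` is given by the
explicit formula `η(t) = sup_{s∈[0,t]} (ψ(s) − h(s))⁺`, `φ = ψ − η`. -/
theorem skorohod_problem_uniqueness
    (h ψ φ η : ℝ → ℝ)
    (hh : ContinuousOn h (Set.Ici 0))
    (hψ : ContinuousOn ψ (Set.Ici 0))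
    (hφc : ContinuousOn φ (Set.Ici 0))
    (hηc : ContinuousOn η (Set.Ici 0))
    -- (1) φ = ψ − η
    (h1 : ∀ t, 0 ≤ t → φ t = ψ t - η t)
    -- (2) φ ≤ h
    (h2 : ∀ t, 0 ≤ t → φ t ≤ h t)
    -- (3) η is non-negative, non-decreasing and flat off the boundary
    (h3a : ∀ t, 0 ≤ t → 0 ≤ η t)
    (h3b : ∀ s t, 0 ≤ s → s ≤ t → η s ≤ η t)
    (h3c : ∀ s t, 0 ≤ s → s ≤ t → (∀ u ∈ Set.Icc s t, φ u < h u) → η s = η t)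
    -- initial condition
    (h0 : η 0 = max (ψ 0 - h 0) 0) :
    ∀ t, 0 ≤ t →
      η t = sSup ((fun s => max (ψ s - h s) 0) '' Set.Icc 0 t) ∧
      φ t = ψ t - η t :=
  skorohod_problem_uniqueness_general h ψ φ η hh hψ hηc h1 h2 h3a h3b h3c h0
end

section
/- Let h : [0,∞) → ℝ be continuous and let ψ : [0,∞) → ℝ be continuous and non-decreasing. Let φ(t) = ψ(t) − sup_{s∈[0,t]} max(ψ(s) − h(s), 0) be the Skorohod-map image of ψ. Then for every t ≥ 0, φ(t) ≥ min( ψ(0), inf_{s∈[0,t]} h(s) ). -/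
/-! Since `ψ` is non-decreasing, every term of the supremum satisfies
`max (ψ s - h s) 0 ≤ ψ t - min (ψ 0) (h s)`, so subtracting the supremum from `ψ t` leaves at
least `min (ψ 0) (inf h)`. -/

open Set

theorem sSup_image_max_sub_le_sub {ψ h : ℝ → ℝ} {t m : ℝ} (hψ : MonotoneOn ψ (Icc 0 t))
    (ht : 0 ≤ t) (hmh : ∀ s ∈ Icc 0 t, m ≤ h s) (hmψ : m ≤ ψ 0) :
    sSup ((fun s => max (ψ s - h s) 0) '' Icc 0 t) ≤ ψ t - m := by
  have hψ0t : ψ 0 ≤ ψ t := hψ (left_mem_Icc.2 ht) (right_mem_Icc.2 ht) ht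
  refine Real.sSup_le ?_ (by linarith)
  rintro _ ⟨s, hs, rfl⟩
  have hψst : ψ s ≤ ψ t := hψ hs (right_mem_Icc.2 ht) hs.2
  have := hmh s hs
  exact max_le (by linarith) (by linarith)

theorem not_bddAbove_image_max_sub {ψ h : ℝ → ℝ} {t : ℝ} (hψ : MonotoneOn ψ (Icc 0 t))
    (hh : ¬BddBelow (h '' Icc 0 t)) :
    ¬BddAbove ((fun s => max (ψ s - h s) 0) '' Icc 0 t) := by
  rintro ⟨M, hM⟩
  refine hh ⟨ψ 0 - M, ?_⟩
  rintro _ ⟨s, hs, rfl⟩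
  have hψ0s : ψ 0 ≤ ψ s := hψ (left_mem_Icc.2 (hs.1.trans hs.2)) hs hs.1
  have := hM (mem_image_of_mem _ hs)
  simp only [max_le_iff] at this
  linarith [this.1]

theorem skorohod_map_lower_bound_general
    (h ψ : ℝ → ℝ)
    (hψmono : MonotoneOn ψ (Set.Ici 0))
    (φ : ℝ → ℝ)
    (hφ : ∀ t, 0 ≤ t →
      φ t = ψ t - sSup ((fun s => max (ψ s - h s) 0) '' Set.Icc 0 t)) :
    ∀ t, 0 ≤ t → min (ψ 0) (sInf (h '' Set.Icc 0 t)) ≤ φ t := by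
  intro t ht
  have hψ : MonotoneOn ψ (Icc 0 t) := hψmono.mono Icc_subset_Ici_self
  rw [hφ t ht]
  by_cases hb : BddBelow (h '' Icc 0 t)
  · have := sSup_image_max_sub_le_sub hψ ht
      (fun s hs => (min_le_right _ _).trans (csInf_le hb (mem_image_of_mem h hs))) (min_le_left _ _)
    linarith
  · -- The supremum is over a set unbounded above, so `sSup` takes its junk value `0`.
    rw [Real.sSup_of_not_bddAbove (not_bddAbove_image_max_sub hψ hb), sub_zero]
    exact (min_le_left _ _).trans (hψ (left_mem_Icc.2 ht) (right_mem_Icc.2 ht) ht)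

/-- Lower bound for the Skorohod-map image of a non-decreasing input `ψ` on the
time-varying domain `(−∞, h(·)]`: for every `t ≥ 0`,
`φ(t) ≥ min(ψ(0), inf_{s∈[0,t]} h(s))`. -/
theorem skorohod_map_lower_bound
    (h ψ : ℝ → ℝ)
    (hh : ContinuousOn h (Set.Ici 0))
    (hψc : ContinuousOn ψ (Set.Ici 0))
    (hψmono : MonotoneOn ψ (Set.Ici 0))
    (φ : ℝ → ℝ)
    (hφ : ∀ t, 0 ≤ t →
      φ t = ψ t - sSup ((fun s => max (ψ s - h s) 0) '' Set.Icc 0 t)) :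
    ∀ t, 0 ≤ t → min (ψ 0) (sInf (h '' Set.Icc 0 t)) ≤ φ t :=
  skorohod_map_lower_bound_general h ψ hψmono φ hφ
end

section
/- Let T > 0 and let H : [0,∞) × [0,T] → [0,∞) be continuous, such that (i) for each t ∈ [0,T], the map y ↦ H(y,t) is strictly decreasing on { y ≥ 0 : H(y,t) > 0 }, and (ii) sup_{t∈[0,T]} H(y,t) → 0 as y → ∞. Fix δ > 0. Define χ(x,t) = inf{ y ≥ 0 : H(y,t) ≤ x } for x > 0, and χ̃(x,t) = χ(max(x, δ), t) for x ≥ 0, t ∈ [0,T]. Then χ̃ is a continuous function on [0,∞) × [0,T]. -/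
/-!
The sublevel sets `{y ≥ 0 | H y t ≤ x}` are nonempty for `x ≥ δ` by the uniform decay, so
`χ(x,t)` is a genuine infimum there. Strict decrease of `H` on its positivity set turns this
infimum into a sharp threshold: `H y t < x` for `y > χ(x,t)` and `H y t > x` for `y < χ(x,t)`.
Both strict inequalities persist for `(x', t')` near `(x, t)` by continuity of `H y` in `t`,
which pins `χ(x', t')` between any two levels enclosing `χ(x, t)`.
-/

open Filter Set Topology

noncomputable def genInv {P : Type*} (H : ℝ → P → ℝ) (x : ℝ) (t : P) : ℝ :=
  sInf {y | 0 ≤ y ∧ H y t ≤ x}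

def StrictAntiWherePos {P : Type*} (H : ℝ → P → ℝ) (s : Set P) : Prop :=
  ∀ t ∈ s, ∀ y₁ y₂, 0 ≤ y₁ → y₁ < y₂ → 0 < H y₂ t → H y₂ t < H y₁ t

section GenInv

variable {P : Type*} {H : ℝ → P → ℝ} {s : Set P} {x y : ℝ} {t : P}

theorem genInv_le (hy : 0 ≤ y) (hHy : H y t ≤ x) : genInv H x t ≤ y :=
  csInf_le ⟨0, fun _ hz => hz.1⟩ ⟨hy, hHy⟩

theorem lt_apply_of_lt_genInv (hy : 0 ≤ y) (h : y < genInv H x t) : x < H y t :=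
  lt_of_not_ge fun hle => (genInv_le hy hle).not_gt h

theorem genInv_nonneg (hne : {y | 0 ≤ y ∧ H y t ≤ x}.Nonempty) : 0 ≤ genInv H x t :=
  le_csInf hne fun _ hz => hz.1

theorem apply_lt_of_genInv_lt (hH : StrictAntiWherePos H s) (ht : t ∈ s) (hx : 0 < x)
    (hne : {y | 0 ≤ y ∧ H y t ≤ x}.Nonempty) (h : genInv H x t < y) : H y t < x := by
  obtain ⟨z, ⟨hz, hzx⟩, hzy⟩ := exists_lt_of_csInf_lt hne h
  rcases le_or_gt (H y t) 0 with hneg | hpos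
  · exact hneg.trans_lt hx
  · exact (hH t ht z y hz hzy hpos).trans_le hzx

theorem le_genInv_of_lt_apply (hH : StrictAntiWherePos H s) (ht : t ∈ s) (hx : 0 ≤ x)
    (hne : {y | 0 ≤ y ∧ H y t ≤ x}.Nonempty) (h : x < H y t) : y ≤ genInv H x t :=
  le_csInf hne fun z ⟨hz, hzx⟩ => by
    by_contra! hzy
    linarith [hH t ht z y hz hzy (hx.trans_lt h)]

variable [TopologicalSpace P]

theorem continuousOn_genInv {δ : ℝ} (hδ : 0 < δ) (hcont : ∀ y, 0 ≤ y → ContinuousOn (H y) s)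
    (hH : StrictAntiWherePos H s) (hne : ∀ t ∈ s, {y | 0 ≤ y ∧ H y t ≤ δ}.Nonempty) :
    ContinuousOn (fun p : ℝ × P => genInv H p.1 p.2) (Ici δ ×ˢ s) := by
  rintro ⟨x₀, t₀⟩ hp₀
  have hne' : ∀ p ∈ Ici δ ×ˢ s, {y | 0 ≤ y ∧ H y p.2 ≤ p.1}.Nonempty := fun p hp =>
    (hne p.2 hp.2).mono fun y hy => ⟨hy.1, hy.2.trans hp.1⟩
  have hHy : ∀ y, 0 ≤ y →
      Tendsto (fun p : ℝ × P => H y p.2) (𝓝[Ici δ ×ˢ s] (x₀, t₀)) (𝓝 (H y t₀)) := fun y hy =>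
    ((hcont y hy t₀ hp₀.2).comp continuousWithinAt_snd fun p hp => hp.2).tendsto
  have hfst : Tendsto Prod.fst (𝓝[Ici δ ×ˢ s] (x₀, t₀)) (𝓝 x₀) := continuousWithinAt_fst.tendsto
  have hmem : ∀ᶠ p in 𝓝[Ici δ ×ˢ s] (x₀, t₀), p ∈ Ici δ ×ˢ s := self_mem_nhdsWithin
  refine tendsto_order.2 ⟨fun a ha => ?_, fun b hb => ?_⟩
  · rcases lt_or_ge a 0 with ha | ha'
    · filter_upwards [hmem] with p hp using ha.trans_le (genInv_nonneg (hne' p hp))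
    obtain ⟨y, hay, hy⟩ := exists_between ha
    have hy0 : 0 ≤ y := ha'.trans hay.le
    filter_upwards [hmem, hfst.eventually_lt (hHy y hy0) (lt_apply_of_lt_genInv hy0 hy)]
      with p hp hlt
    exact hay.trans_le (le_genInv_of_lt_apply hH hp.2 (hδ.le.trans hp.1) (hne' p hp) hlt)
  · obtain ⟨y, hy, hyb⟩ := exists_between hb
    have hy0 : 0 ≤ y := (genInv_nonneg (hne' _ hp₀)).trans hy.le
    have hlt : H y t₀ < x₀ := apply_lt_of_genInv_lt hH hp₀.2 (hδ.trans_le hp₀.1) (hne' _ hp₀) hy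
    filter_upwards [(hHy y hy0).eventually_lt hfst hlt] with p hp
    exact (genInv_le hy0 hp.le).trans_lt hyb

theorem exists_nonneg_forall_lt_of_tendsto_sSup {K : Set P} (hK : IsCompact K)
    (hcont : ∀ y, 0 ≤ y → ContinuousOn (H y) K)
    (hdecay : Tendsto (fun y => sSup (H y '' K)) atTop (𝓝 0)) {δ : ℝ} (hδ : 0 < δ) :
    ∃ Y, 0 ≤ Y ∧ ∀ t ∈ K, H Y t < δ := by
  obtain ⟨Y, hYδ, hY⟩ := ((hdecay.eventually (gt_mem_nhds hδ)).and (eventually_ge_atTop 0)).exists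
  exact ⟨Y, hY, fun t ht => (le_csSup (hK.bddAbove_image (hcont Y hY)) ⟨t, ht, rfl⟩).trans_lt hYδ⟩

end GenInv

theorem chi_tilde_continuous_general
    (T : ℝ)
    (H : ℝ → ℝ → ℝ)
    (hHcont : ContinuousOn (fun p : ℝ × ℝ => H p.1 p.2) (Set.Ici 0 ×ˢ Set.Icc 0 T))
    -- (i) strict decrease in `y` on the positivity set
    (hHstrict : ∀ t ∈ Set.Icc (0:ℝ) T,
      ∀ y₁ y₂, 0 ≤ y₁ → y₁ < y₂ → 0 < H y₂ t → H y₂ t < H y₁ t)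
    -- (ii) uniform decay at infinity
    (hHdecay : Filter.Tendsto (fun y => sSup ((fun t => H y t) '' Set.Icc 0 T))
      Filter.atTop (nhds 0))
    (δ : ℝ) (hδ : 0 < δ)
    (chi : ℝ → ℝ → ℝ)
    (hchi : ∀ x t, 0 < x → chi x t = sInf {y : ℝ | 0 ≤ y ∧ H y t ≤ x})
    (chiT : ℝ → ℝ → ℝ)
    (hchiT : ∀ x t, chiT x t = chi (max x δ) t) :
    ContinuousOn (fun p : ℝ × ℝ => chiT p.1 p.2) (Set.Ici 0 ×ˢ Set.Icc 0 T) := by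
  have hHt : ∀ y, 0 ≤ y → ContinuousOn (H y) (Icc 0 T) := fun y hy =>
    hHcont.comp (continuous_const.prodMk continuous_id).continuousOn fun _ ht => ⟨hy, ht⟩
  obtain ⟨Y, hY, hYδ⟩ := exists_nonneg_forall_lt_of_tendsto_sSup isCompact_Icc hHt hHdecay hδ
  have hg := continuousOn_genInv hδ hHt hHstrict fun t ht => ⟨Y, hY, (hYδ t ht).le⟩
  refine (hg.comp ((continuous_fst.max continuous_const).prodMk continuous_snd).continuousOn
    fun p hp => ⟨le_max_right _ δ, hp.2⟩).congr fun p _ => ?_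
  simp only [Function.comp_apply, hchiT, hchi _ _ (hδ.trans_le (le_max_right p.1 δ)), genInv]

/-- Continuity of the truncated generalized inverse `χ̃(x,t) = χ(max(x,δ), t)`,
`χ(x,t) = inf{y ≥ 0 : H(y,t) ≤ x}`, for a continuous non-negative `H` on
`[0,∞) × [0,T]` that is strictly decreasing in `y` on its positivity set and
tends to `0` uniformly in `t` as `y → ∞`. -/
theorem chi_tilde_continuous
    (T : ℝ) (hT : 0 < T)
    (H : ℝ → ℝ → ℝ)
    (hHcont : ContinuousOn (fun p : ℝ × ℝ => H p.1 p.2) (Set.Ici 0 ×ˢ Set.Icc 0 T))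
    (hHnonneg : ∀ y t, 0 ≤ y → t ∈ Set.Icc 0 T → 0 ≤ H y t)
    -- (i) strict decrease in `y` on the positivity set
    (hHstrict : ∀ t ∈ Set.Icc (0:ℝ) T,
      ∀ y₁ y₂, 0 ≤ y₁ → y₁ < y₂ → 0 < H y₂ t → H y₂ t < H y₁ t)
    -- (ii) uniform decay at infinity
    (hHdecay : Filter.Tendsto (fun y => sSup ((fun t => H y t) '' Set.Icc 0 T))
      Filter.atTop (nhds 0))
    (δ : ℝ) (hδ : 0 < δ)
    (chi : ℝ → ℝ → ℝ)
    (hchi : ∀ x t, 0 < x → chi x t = sInf {y : ℝ | 0 ≤ y ∧ H y t ≤ x})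
    (chiT : ℝ → ℝ → ℝ)
    (hchiT : ∀ x t, chiT x t = chi (max x δ) t) :
    ContinuousOn (fun p : ℝ × ℝ => chiT p.1 p.2) (Set.Ici 0 ×ˢ Set.Icc 0 T) :=
  chi_tilde_continuous_general T H hHcont hHstrict hHdecay δ hδ chi hchi chiT hchiT
end

section
/- Let 𝒬₀ be a finite non-atomic Borel measure on [0,∞), let ν be a finite Borel measure on [0,∞), and let λ > 0. For x, t ≥ 0 define the finite Borel measure 𝒢(x,t) on [0,∞) by 𝒢(x,t)(B) = 𝒬₀( (B ∩ [x,∞)) + t ) + λ ∫₀ᵗ ν( (B ∩ [x,∞)) + t − s ) ds for Borel sets B ⊆ [0,∞), where A + u = { a + u : a ∈ A }. Then the map (x,t) ↦ 𝒢(x,t) is continuous from [0,∞) × [0,∞) into the space of finite Borel measures on [0,∞) equipped with the topology of weak convergence: whenever (x_n, t_n) → (x, t), one has ∫ f d𝒢(x_n,t_n) → ∫ f d𝒢(x,t) for every bounded continuous f : [0,∞) → ℝ. -/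
/-!
Both terms of `pairG` are built from `∫_{[c+s,∞)} f(y-s) dμ(y)`. By dominated convergence
this is jointly continuous in `(c, s)` wherever `c + s` is not an atom of `μ`, since off that
atom the integrand converges pointwise. For the non-atomic `𝒬₀` this gives the first term.
A finite `ν` has only countably many atoms, so for fixed `x` the `ν`-integral converges for
almost every `s`; a second dominated convergence on `[0, t]`, plus the bound
`M ν(ℝ) |tₙ - t|` for the integral over the moving end of `[0, tₙ]`, gives the second term.
-/

open MeasureTheory

/-- Integral of a bounded function against the measure
`𝒢(x,t)(B) = 𝒬₀((B ∩ [x,∞)) + t) + λ ∫₀ᵗ ν((B ∩ [x,∞)) + t − s) ds`, in its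
equivalent form
`⟨f, 𝒢(x,t)⟩ = ∫_{[x+t,∞)} f(y−t) d𝒬₀(y) + λ ∫₀ᵗ ∫_{[x+s,∞)} f(y−s) dν(y) ds`. -/
noncomputable def pairG (Q0 ν : Measure ℝ) (lam : ℝ) (f : ℝ → ℝ) (x t : ℝ) : ℝ :=
  (∫ y in Set.Ici (x + t), f (y - t) ∂Q0) +
    lam * ∫ s in (0:ℝ)..t, ∫ y in Set.Ici (x + s), f (y - s) ∂ν

open Filter Set Topology

section

variable {E : Type*} [NormedAddCommGroup E] [NormedSpace ℝ E]

theorem tendsto_intervalIntegral_of_norm_le_const {ι : Type*} {l : Filter ι}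
    [l.IsCountablyGenerated] {F : ι → ℝ → E} {g : ℝ → E} {a b C : ℝ} {bs : ι → ℝ}
    (hF_meas : ∀ i, AEStronglyMeasurable (F i)) (hF_le : ∀ i s, ‖F i s‖ ≤ C)
    (h_lim : ∀ᵐ s, Tendsto (fun i => F i s) l (𝓝 (g s))) (hbs : Tendsto bs l (𝓝 b)) :
    Tendsto (fun i => ∫ s in a..bs i, F i s) l (𝓝 (∫ s in a..b, g s)) := by
  have hint : ∀ i c d, IntervalIntegrable (F i) volume c d := fun i c d =>
    (intervalIntegrable_const (c := C)).mono_fun' (hF_meas i).restrict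
      (ae_of_all _ (hF_le i))
  have h_split : ∀ i, ∫ s in a..bs i, F i s = (∫ s in a..b, F i s) + ∫ s in b..bs i, F i s :=
    fun i =>
      (intervalIntegral.integral_add_adjacent_intervals (hint i a b) (hint i b (bs i))).symm
  have h_main : Tendsto (fun i => ∫ s in a..b, F i s) l (𝓝 (∫ s in a..b, g s)) :=
    intervalIntegral.tendsto_integral_filter_of_dominated_convergence (fun _ => C)
      (.of_forall fun i => (hF_meas i).restrict)
      (.of_forall fun i => ae_of_all _ fun s _ => hF_le i s)
      intervalIntegrable_const (h_lim.mono fun s hs _ => hs)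
  have h_tail : Tendsto (fun i => ∫ s in b..bs i, F i s) l (𝓝 0) := by
    refine squeeze_zero_norm (fun i => intervalIntegral.norm_integral_le_of_norm_le_const
      fun s _ => hF_le i s) ?_
    simpa using ((hbs.sub_const b).abs.const_mul C)
  simpa [h_split] using h_main.add h_tail

theorem ae_measure_singleton_add_eq_zero (μ : Measure ℝ) [SFinite μ] (ρ : Measure ℝ)
    [NullSingletonClass ρ] (c : ℝ) : ∀ᵐ s ∂ρ, μ {c + s} = 0 := by
  have h_atoms : {y : ℝ | 0 < μ {y}}.Countable :=
    Measure.countable_meas_pos_of_disjoint_iUnion (fun y => measurableSet_singleton y)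
      (fun _ _ hne => disjoint_singleton.mpr hne)
  refine measure_mono_null (fun s hs => ?_) ((h_atoms.image (· - c)).measure_zero ρ)
  exact ⟨c + s, pos_iff_ne_zero.mpr hs, by ring⟩

noncomputable def shiftedTailIntegral (μ : Measure ℝ) (f : ℝ → E) (c s : ℝ) : E :=
  ∫ y in Ici (c + s), f (y - s) ∂μ

variable {μ : Measure ℝ} {f : ℝ → E}

theorem norm_shiftedTailIntegral_le [IsFiniteMeasure μ] {M : ℝ} (hM : ∀ y, ‖f y‖ ≤ M)
    (c s : ℝ) :
    ‖shiftedTailIntegral μ f c s‖ ≤ M * μ.real univ := by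
  have hM0 : 0 ≤ M := (norm_nonneg _).trans (hM 0)
  calc ‖shiftedTailIntegral μ f c s‖ ≤ M * μ.real (Ici (c + s)) :=
        norm_setIntegral_le_of_norm_le_const (measure_lt_top _ _) fun y _ => hM (y - s)
    _ ≤ M * μ.real univ := mul_le_mul_of_nonneg_left (measureReal_mono (subset_univ _)) hM0

theorem stronglyMeasurable_shiftedTailIntegral [SFinite μ] (hf : StronglyMeasurable f) (c : ℝ) :
    StronglyMeasurable (shiftedTailIntegral μ f c) := by
  have h_eq : shiftedTailIntegral μ f c = fun s =>
      ∫ y, {p : ℝ × ℝ | c + p.1 ≤ p.2}.indicator (fun p => f (p.2 - p.1)) (s, y) ∂μ := by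
    ext s
    rw [shiftedTailIntegral, ← integral_indicator measurableSet_Ici]
    rfl
  rw [h_eq]
  exact ((hf.comp_measurable (measurable_snd.sub measurable_fst)).indicator
    (measurableSet_le (by fun_prop) measurable_snd)).integral_prod_right'

theorem continuousAt_shiftedTailIntegral [IsFiniteMeasure μ] (hf : Continuous f) {M : ℝ}
    (hM : ∀ y, ‖f y‖ ≤ M) {c s : ℝ} (hcs : μ {c + s} = 0) :
    ContinuousAt (fun p : ℝ × ℝ => shiftedTailIntegral μ f p.1 p.2) (c, s) := by
  have h_eq : ∀ a b, shiftedTailIntegral μ f a b =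
      ∫ y, (Ici (a + b)).indicator (fun y => f (y - b)) y ∂μ := fun _ _ =>
    (integral_indicator measurableSet_Ici).symm
  simp only [ContinuousAt, h_eq]
  refine tendsto_integral_filter_of_dominated_convergence (l := 𝓝 (c, s)) (fun _ => M)
    (.of_forall fun p : ℝ × ℝ =>
      (hf.comp (continuous_sub_right p.2)).aestronglyMeasurable.indicator measurableSet_Ici)
    (.of_forall fun p => ae_of_all _ fun y => (norm_indicator_le_norm_self _ _).trans (hM _))
    (integrable_const (μ := μ) M) ?_
  have h_ne : ∀ᵐ y ∂μ, y ≠ c + s := by simpa [ae_iff] using hcs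
  have h_cut : Tendsto (fun p : ℝ × ℝ => p.1 + p.2) (𝓝 (c, s)) (𝓝 (c + s)) :=
    continuousAt_fst.add continuousAt_snd
  filter_upwards [h_ne] with y hy
  rcases hy.lt_or_gt with hlt | hgt
  · rw [indicator_of_notMem (notMem_Ici.2 hlt)]
    refine tendsto_const_nhds.congr' ?_
    filter_upwards [h_cut.eventually (lt_mem_nhds hlt)] with p hp
    rw [indicator_of_notMem (notMem_Ici.2 hp)]
  · rw [indicator_of_mem (mem_Ici.2 hgt.le)]
    refine ((hf.tendsto _).comp (tendsto_const_nhds.sub continuousAt_snd)).congr' ?_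
    filter_upwards [h_cut.eventually (gt_mem_nhds hgt)] with p hp
    rw [indicator_of_mem (mem_Ici.2 hp.le)]
    rfl

end

theorem pairG_weakly_continuous_general
    (Q0 ν : Measure ℝ) [IsFiniteMeasure Q0] [IsFiniteMeasure ν]
    (hnonatomic : ∀ x : ℝ, Q0 {x} = 0)
    (lam : ℝ)
    (x t : ℝ)
    (xs ts : ℕ → ℝ)
    (hxlim : Filter.Tendsto xs Filter.atTop (nhds x))
    (htlim : Filter.Tendsto ts Filter.atTop (nhds t)) :
    ∀ f : ℝ → ℝ, Continuous f → (∃ M, ∀ y, |f y| ≤ M) →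
      Filter.Tendsto (fun n => pairG Q0 ν lam f (xs n) (ts n)) Filter.atTop
        (nhds (pairG Q0 ν lam f x t)) := by
  rintro f hf ⟨M, hM⟩
  have h_first : Tendsto (fun n => shiftedTailIntegral Q0 f (xs n) (ts n)) atTop
      (𝓝 (shiftedTailIntegral Q0 f x t)) :=
    (continuousAt_shiftedTailIntegral hf hM (hnonatomic _)).tendsto.comp
      (hxlim.prodMk_nhds htlim)
  have h_second : Tendsto (fun n => ∫ s in (0:ℝ)..ts n, shiftedTailIntegral ν f (xs n) s) atTop
      (𝓝 (∫ s in (0:ℝ)..t, shiftedTailIntegral ν f x s)) := by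
    refine tendsto_intervalIntegral_of_norm_le_const
      (fun _ => (stronglyMeasurable_shiftedTailIntegral hf.stronglyMeasurable _)
        |>.aestronglyMeasurable)
      (fun _ _ => norm_shiftedTailIntegral_le hM _ _) ?_ htlim
    filter_upwards [ae_measure_singleton_add_eq_zero ν volume x] with s hs
    exact (continuousAt_shiftedTailIntegral hf hM hs).tendsto.comp
      (hxlim.prodMk_nhds tendsto_const_nhds)
  exact h_first.add (h_second.const_mul lam)

/-- Weak continuity of `(x,t) ↦ 𝒢(x,t)`: if `(xₙ,tₙ) → (x,t)` in `[0,∞)²`, then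
`∫ f d𝒢(xₙ,tₙ) → ∫ f d𝒢(x,t)` for every bounded continuous `f`. Here `𝒬₀` is a
finite non-atomic Borel measure on `[0,∞)` and `ν` a finite Borel measure on
`[0,∞)`. -/
theorem pairG_weakly_continuous
    (Q0 ν : Measure ℝ) [IsFiniteMeasure Q0] [IsFiniteMeasure ν]
    (hQsupp : Q0 (Set.Iio 0) = 0) (hνsupp : ν (Set.Iio 0) = 0)
    (hnonatomic : ∀ x : ℝ, Q0 {x} = 0)
    (lam : ℝ) (hlam : 0 < lam)
    (x t : ℝ) (hx : 0 ≤ x) (ht : 0 ≤ t)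
    (xs ts : ℕ → ℝ) (hxs : ∀ n, 0 ≤ xs n) (hts : ∀ n, 0 ≤ ts n)
    (hxlim : Filter.Tendsto xs Filter.atTop (nhds x))
    (htlim : Filter.Tendsto ts Filter.atTop (nhds t)) :
    ∀ f : ℝ → ℝ, Continuous f → (∃ M, ∀ y, |f y| ≤ M) →
      Filter.Tendsto (fun n => pairG Q0 ν lam f (xs n) (ts n)) Filter.atTop
        (nhds (pairG Q0 ν lam f x t)) :=
  pairG_weakly_continuous_general Q0 ν hnonatomic lam x t xs ts hxlim htlim
end

section
/- Let 0 < μ < 1 and 0 < θ < 1, and assume 1 − μ < (1−θ) θ^{θ/(1−θ)}. Define f(s) = 1 − μ + e^{−s} − e^{−θ s} and g(t) = ∫₀ᵗ f(s) ds = 1 − 1/θ + (1−μ)t − e^{−t} + (1/θ) e^{−θ t}. Then f has a smallest zero a₁ ∈ (0,∞), the set { t ≥ a₁ : g(t) = g(a₁) } has a largest element a₂ ∈ [a₁,∞), and the function η(t) := sup_{s∈[0,t]} max(g(s), 0) is given piecewise by: η(t) = g(t) for 0 ≤ t ≤ a₁; η(t) = g(a₁) for a₁ ≤ t ≤ a₂;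 and η(t) = g(t) for t ≥ a₂. -/
/-!
`f` decreases up to its critical point `s₀ = -log θ / (1 - θ)` and increases afterwards, with
`f 0 = 1 - μ > 0`, `f → 1 - μ > 0` at infinity, and `f s₀ = 1 - μ - (1 - θ) θ ^ (θ / (1 - θ)) < 0`
by the hypothesis. So `f` has exactly two zeros `a₁ < b₁`, and its primitive `g` (with `g 0 = 0`)
rises on `[0, a₁]`, falls on `[a₁, b₁]` and then rises to infinity. Hence `g` returns to the level
`g a₁` exactly once after `b₁`, at `a₂`, and the running maximum of `g⁺` is `g` before `a₁`, stays
at `g a₁` until `a₂`, and follows `g` again afterwards.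
-/

open Real Set Filter Topology

theorem csSup_image_max_zero_eq {α : Type*} {g : α → ℝ} {S : Set α} {c : ℝ} {x : α}
    (hc : IsGreatest (g '' S) c) (hx : x ∈ S) (hgx : 0 ≤ g x) :
    sSup ((fun s => max (g s) 0) '' S) = c := by
  have hc0 : 0 ≤ c := hgx.trans (hc.2 (mem_image_of_mem g hx))
  refine IsGreatest.csSup_eq ⟨?_, ?_⟩
  · obtain ⟨y, hy, rfl⟩ := hc.1
    exact ⟨y, hy, max_eq_left hc0⟩
  · rintro _ ⟨s, hs, rfl⟩
    exact max_le (hc.2 (mem_image_of_mem g hs)) hc0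

section RunningMax

variable {g : ℝ → ℝ} {a₁ a₂ t : ℝ}

theorem isGreatest_image_Icc_zero_of_le (hrise : MonotoneOn g (Icc 0 a₁)) (ht : t ∈ Icc 0 a₁) :
    IsGreatest (g '' Icc 0 t) (g t) :=
  (hrise.mono (Icc_subset_Icc_right ht.2)).map_isGreatest (isGreatest_Icc ht.1)

theorem isGreatest_image_Icc_zero_of_mem_Icc (hrise : MonotoneOn g (Icc 0 a₁))
    (hdip : ∀ s ∈ Icc a₁ a₂, g s ≤ g a₁) (ha₁ : 0 ≤ a₁) (ht : t ∈ Icc a₁ a₂) :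
    IsGreatest (g '' Icc 0 t) (g a₁) := by
  refine ⟨mem_image_of_mem g ⟨ha₁, ht.1⟩, ?_⟩
  rintro _ ⟨s, hs, rfl⟩
  rcases le_total s a₁ with h | h
  · exact hrise ⟨hs.1, h⟩ ⟨ha₁, le_rfl⟩ h
  · exact hdip s ⟨h, hs.2.trans ht.2⟩

theorem isGreatest_image_Icc_zero_of_ge (hrise : MonotoneOn g (Icc 0 a₁))
    (hdip : ∀ s ∈ Icc a₁ a₂, g s ≤ g a₁) (ha₁ : 0 ≤ a₁) (ha₁₂ : a₁ ≤ a₂) (ha₂ : g a₂ = g a₁)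
    (hrise₂ : MonotoneOn g (Ici a₂)) (ht : a₂ ≤ t) :
    IsGreatest (g '' Icc 0 t) (g t) := by
  refine ⟨mem_image_of_mem g ⟨ha₁.trans (ha₁₂.trans ht), le_rfl⟩, ?_⟩
  rintro _ ⟨s, hs, rfl⟩
  rcases le_total s a₂ with h | h
  · calc g s ≤ g a₁ := (isGreatest_image_Icc_zero_of_mem_Icc hrise hdip ha₁
          ⟨ha₁₂, le_rfl⟩).2 (mem_image_of_mem g ⟨hs.1, h⟩)
      _ = g a₂ := ha₂.symm
      _ ≤ g t := hrise₂ (mem_Ici.2 le_rfl) ht ht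
  · exact hrise₂ h (h.trans hs.2) hs.2

end RunningMax

theorem exists_isGreatest_level_set {g : ℝ → ℝ} {a b : ℝ} (hg : Continuous g) (hab : a ≤ b)
    (hfall : AntitoneOn g (Icc a b)) (hrise : StrictMonoOn g (Ici b))
    (htop : Tendsto g atTop atTop) :
    ∃ a₂, b ≤ a₂ ∧ IsGreatest {t | a ≤ t ∧ g t = g a} a₂ ∧ ∀ s ∈ Icc a a₂, g s ≤ g a := by
  obtain ⟨T, hgT, hbT⟩ := ((htop.eventually_ge_atTop (g a)).and (eventually_ge_atTop b)).exists
  obtain ⟨a₂, ha₂, hga₂⟩ := intermediate_value_Icc hbT hg.continuousOn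
    ⟨hfall (left_mem_Icc.2 hab) (right_mem_Icc.2 hab) hab, hgT⟩
  refine ⟨a₂, ha₂.1, ⟨⟨hab.trans ha₂.1, hga₂⟩, ?_⟩, ?_⟩
  · rintro t ⟨-, hgt⟩
    by_contra! h
    exact (hrise ha₂.1 (ha₂.1.trans h.le) h).ne (hga₂.trans hgt.symm)
  · rintro s ⟨has, hsa₂⟩
    rcases le_total s b with h | h
    · exact hfall (left_mem_Icc.2 hab) ⟨has, h⟩ has
    · exact hga₂ ▸ hrise.monotoneOn h ha₂.1 hsa₂

theorem exists_zeros_of_valley {f : ℝ → ℝ} {x m y : ℝ} (hf : Continuous f)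
    (hanti : StrictAntiOn f (Iic m)) (hmono : StrictMonoOn f (Ici m))
    (hxm : x ≤ m) (hmy : m ≤ y) (hx : 0 < f x) (hm : f m < 0) (hy : 0 < f y) :
    ∃ a b, x < a ∧ a < b ∧ f a = 0 ∧ (∀ s < a, 0 < f s) ∧ (∀ s ∈ Ioo a b, f s < 0) ∧
      ∀ s, b < s → 0 < f s := by
  obtain ⟨a, ha, hfa⟩ := intermediate_value_Icc' hxm hf.continuousOn ⟨hm.le, hx.le⟩
  obtain ⟨b, hb, hfb⟩ := intermediate_value_Icc hmy hf.continuousOn ⟨hm.le, hy.le⟩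
  have hxa : x < a := ha.1.lt_of_ne (by rintro rfl; linarith)
  have ham : a < m := ha.2.lt_of_ne (by rintro rfl; linarith)
  have hmb : m < b := hb.1.lt_of_ne (by rintro rfl; linarith)
  refine ⟨a, b, hxa, ham.trans hmb, hfa, fun s hs => ?_, fun s hs => ?_, fun s hs => ?_⟩
  · exact hfa ▸ hanti (hs.trans ham).le ham.le hs
  · rcases le_total s m with h | h
    · exact hfa ▸ hanti ham.le h hs.1
    · exact hfb ▸ hmono h hmb.le hs.2
  · exact hfb ▸ hmono hmb.le (hmb.trans hs).le hs

noncomputable section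

namespace ExpExample

variable (c θ : ℝ)

def f (s : ℝ) : ℝ := c + exp (-s) - exp (-θ * s)

def g (t : ℝ) : ℝ := 1 - 1 / θ + c * t - exp (-t) + 1 / θ * exp (-θ * t)

def critPt : ℝ := -log θ / (1 - θ)

variable {c θ}

theorem continuous_f : Continuous (f c θ) := by unfold f; fun_prop

theorem continuous_g : Continuous (g c θ) := by unfold g; fun_prop

theorem g_zero : g c θ 0 = 0 := by simp [g]

theorem hasDerivAt_g (hθ : θ ≠ 0) (t : ℝ) : HasDerivAt (g c θ) (f c θ t) t := by
  have h := (((hasDerivAt_id t).const_mul c).const_add (1 - 1 / θ)).sub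
    ((hasDerivAt_neg t).exp) |>.add (((hasDerivAt_id t).const_mul (-θ)).exp.const_mul (1 / θ))
  unfold g
  refine h.congr_deriv ?_
  simp only [f, id]
  field_simp
  ring

theorem g_eq_integral_f (hθ : θ ≠ 0) (t : ℝ) : g c θ t = ∫ s in (0 : ℝ)..t, f c θ s := by
  rw [intervalIntegral.integral_eq_sub_of_hasDerivAt (fun s _ => hasDerivAt_g hθ s)
    (continuous_f.intervalIntegrable 0 t), g_zero, sub_zero]

theorem one_sub_mul_critPt (hθ : θ ≠ 1) : (1 - θ) * critPt θ = -log θ := by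
  rw [critPt]; field_simp [sub_ne_zero.2 hθ.symm]

theorem critPt_pos (hθ0 : 0 < θ) (hθ1 : θ < 1) : 0 < critPt θ :=
  div_pos (neg_pos.2 (log_neg hθ0 hθ1)) (sub_pos.2 hθ1)

theorem hasDerivAt_f (hθ0 : 0 < θ) (hθ1 : θ ≠ 1) (s : ℝ) :
    HasDerivAt (f c θ) (exp (-s) * (exp ((1 - θ) * (s - critPt θ)) - 1)) s := by
  have h := ((hasDerivAt_neg s).exp.const_add c).sub ((hasDerivAt_id s).const_mul (-θ)).exp
  have hexp : exp (-s) * exp ((1 - θ) * (s - critPt θ)) = θ * exp (-θ * s) := by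
    rw [← exp_add, mul_sub, one_sub_mul_critPt hθ1,
      show -s + ((1 - θ) * s - -log θ) = log θ + -θ * s by ring, exp_add, exp_log hθ0]
  unfold f
  refine h.congr_deriv ?_
  rw [mul_sub_one, hexp, id]
  ring

theorem f_strictAntiOn (hθ0 : 0 < θ) (hθ1 : θ < 1) : StrictAntiOn (f c θ) (Iic (critPt θ)) := by
  refine strictAntiOn_of_hasDerivWithinAt_neg (convex_Iic _) continuous_f.continuousOn
    (fun s _ => (hasDerivAt_f hθ0 hθ1.ne s).hasDerivWithinAt) fun s hs => ?_
  rw [interior_Iic] at hs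
  have : exp ((1 - θ) * (s - critPt θ)) < 1 :=
    exp_lt_one_iff.2 (mul_neg_of_pos_of_neg (sub_pos.2 hθ1) (sub_neg.2 hs))
  exact mul_neg_of_pos_of_neg (exp_pos _) (sub_neg.2 this)

theorem f_strictMonoOn (hθ0 : 0 < θ) (hθ1 : θ < 1) : StrictMonoOn (f c θ) (Ici (critPt θ)) := by
  refine strictMonoOn_of_hasDerivWithinAt_pos (convex_Ici _) continuous_f.continuousOn
    (fun s _ => (hasDerivAt_f hθ0 hθ1.ne s).hasDerivWithinAt) fun s hs => ?_
  rw [interior_Ici] at hs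
  have : 1 < exp ((1 - θ) * (s - critPt θ)) :=
    one_lt_exp_iff.2 (mul_pos (sub_pos.2 hθ1) (sub_pos.2 hs))
  exact mul_pos (exp_pos _) (sub_pos.2 this)

theorem f_zero : f c θ 0 = c := by simp [f]

theorem f_critPt (hθ0 : 0 < θ) (hθ1 : θ ≠ 1) :
    f c θ (critPt θ) = c - (1 - θ) * θ ^ (θ / (1 - θ)) := by
  have h1 : exp (-θ * critPt θ) = θ ^ (θ / (1 - θ)) := by
    rw [rpow_def_of_pos hθ0, critPt]
    congr 1
    field_simp [sub_ne_zero.2 hθ1.symm]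
  have h2 : exp (-critPt θ) = θ * θ ^ (θ / (1 - θ)) := by
    rw [show -critPt θ = log θ + -θ * critPt θ by linarith [one_sub_mul_critPt hθ1], exp_add,
      exp_log hθ0, h1]
  rw [f, h1, h2]
  ring

theorem tendsto_f_atTop (hθ : 0 < θ) : Tendsto (f c θ) atTop (𝓝 c) := by
  have h : Tendsto (fun s => exp (-θ * s)) atTop (𝓝 0) :=
    tendsto_exp_comp_nhds_zero.2 (tendsto_id.const_mul_atTop_of_neg (neg_neg_of_pos hθ))
  have := (tendsto_exp_neg_atTop_nhds_zero.const_add c).sub h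
  rwa [add_zero, sub_zero] at this

theorem tendsto_g_atTop (hc : 0 < c) (hθ : 0 < θ) : Tendsto (g c θ) atTop atTop := by
  refine tendsto_atTop_mono' _ ?_
    (tendsto_atTop_add_const_right _ (-(1 / θ)) (tendsto_id.const_mul_atTop hc))
  filter_upwards [eventually_ge_atTop 0] with t ht
  have : exp (-t) ≤ 1 := exp_le_one_iff.2 (by linarith)
  have : 0 < 1 / θ * exp (-θ * t) := by positivity
  simp only [g, id]
  linarith

theorem exists_zeros_f (hc : 0 < c) (hθ0 : 0 < θ) (hθ1 : θ < 1)
    (hcrit : c < (1 - θ) * θ ^ (θ / (1 - θ))) :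
    ∃ a b, 0 < a ∧ a < b ∧ f c θ a = 0 ∧ (∀ s < a, 0 < f c θ s) ∧
      (∀ s ∈ Ioo a b, f c θ s < 0) ∧ ∀ s, b < s → 0 < f c θ s := by
  obtain ⟨y, hy, hmy⟩ := (((tendsto_f_atTop hθ0).eventually (lt_mem_nhds hc)).and
    (eventually_ge_atTop (critPt θ))).exists
  exact exists_zeros_of_valley continuous_f (f_strictAntiOn hθ0 hθ1) (f_strictMonoOn hθ0 hθ1)
    (critPt_pos hθ0 hθ1).le hmy (by rwa [f_zero]) (by rw [f_critPt hθ0 hθ1.ne]; linarith) hy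

theorem exists_g_rise_fall_rise (hc : 0 < c) (hθ0 : 0 < θ) (hθ1 : θ < 1)
    (hcrit : c < (1 - θ) * θ ^ (θ / (1 - θ))) :
    ∃ a b, 0 < a ∧ a < b ∧ IsLeast {s | f c θ s = 0} a ∧ StrictMonoOn (g c θ) (Icc 0 a) ∧
      StrictAntiOn (g c θ) (Icc a b) ∧ StrictMonoOn (g c θ) (Ici b) := by
  obtain ⟨a, b, ha, hab, hfa, hpos, hneg, hpos₂⟩ := exists_zeros_f hc hθ0 hθ1 hcrit
  have hg' (D : Set ℝ) : ∀ x ∈ interior D, HasDerivWithinAt (g c θ) (f c θ x) (interior D) x :=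
    fun x _ => (hasDerivAt_g hθ0.ne' x).hasDerivWithinAt
  refine ⟨a, b, ha, hab, ⟨hfa, fun s hs => not_lt.1 fun h => (hpos s h).ne' hs⟩, ?_, ?_, ?_⟩
  · refine strictMonoOn_of_hasDerivWithinAt_pos (convex_Icc 0 a) continuous_g.continuousOn
      (hg' _) fun x hx => hpos x ?_
    rw [interior_Icc] at hx
    exact hx.2
  · refine strictAntiOn_of_hasDerivWithinAt_neg (convex_Icc a b) continuous_g.continuousOn
      (hg' _) fun x hx => hneg x ?_
    rwa [interior_Icc] at hx
  · refine strictMonoOn_of_hasDerivWithinAt_pos (convex_Ici b) continuous_g.continuousOn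
      (hg' _) fun x hx => hpos₂ x ?_
    rwa [interior_Ici] at hx

end ExpExample

end

theorem example_case3b_general
    (μ θ : ℝ) (hμ1 : μ < 1) (hθ0 : 0 < θ) (hθ1 : θ < 1)
    (hcrit : 1 - μ < (1 - θ) * θ ^ (θ / (1 - θ)))
    (f g η : ℝ → ℝ)
    (hf : ∀ s, f s = 1 - μ + Real.exp (-s) - Real.exp (-θ * s))
    (hg : ∀ t, g t = 1 - 1/θ + (1 - μ) * t - Real.exp (-t) + (1/θ) * Real.exp (-θ * t))
    (hη : ∀ t, 0 ≤ t → η t = sSup ((fun s => max (g s) 0) '' Set.Icc 0 t)) :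
    (∀ t, 0 ≤ t → g t = ∫ s in (0:ℝ)..t, f s) ∧
    ∃ a₁ a₂ : ℝ, 0 < a₁ ∧
      IsLeast {s : ℝ | f s = 0} a₁ ∧
      IsGreatest {t : ℝ | a₁ ≤ t ∧ g t = g a₁} a₂ ∧
      (∀ t, 0 ≤ t → t ≤ a₁ → η t = g t) ∧
      (∀ t, a₁ ≤ t → t ≤ a₂ → η t = g a₁) ∧
      (∀ t, a₂ ≤ t → η t = g t) := by
  obtain rfl : f = ExpExample.f (1 - μ) θ := funext hf
  obtain rfl : g = ExpExample.g (1 - μ) θ := funext hg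
  obtain ⟨a₁, b₁, ha₁, hab, hleast, hrise, hfall, hrise₂⟩ :=
    ExpExample.exists_g_rise_fall_rise (sub_pos.2 hμ1) hθ0 hθ1 hcrit
  obtain ⟨a₂, hba₂, hgreatest, hdip⟩ := exists_isGreatest_level_set ExpExample.continuous_g
    hab.le hfall.antitoneOn hrise₂ (ExpExample.tendsto_g_atTop (sub_pos.2 hμ1) hθ0)
  have ha₁₂ : a₁ ≤ a₂ := hab.le.trans hba₂
  have hη_eq {t c : ℝ} (ht : 0 ≤ t) (hc : IsGreatest (ExpExample.g (1 - μ) θ '' Icc 0 t) c) :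
      η t = c :=
    (hη t ht).trans (csSup_image_max_zero_eq hc (left_mem_Icc.2 ht) ExpExample.g_zero.ge)
  refine ⟨fun t _ => ExpExample.g_eq_integral_f hθ0.ne' t, a₁, a₂, ha₁, hleast, hgreatest,
    fun t ht hta₁ => ?_, fun t hta₁ hta₂ => ?_, fun t hta₂ => ?_⟩
  · exact hη_eq ht (isGreatest_image_Icc_zero_of_le hrise.monotoneOn ⟨ht, hta₁⟩)
  · exact hη_eq (ha₁.le.trans hta₁)
      (isGreatest_image_Icc_zero_of_mem_Icc hrise.monotoneOn hdip ha₁.le ⟨hta₁, hta₂⟩)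
  · exact hη_eq (ha₁.le.trans (ha₁₂.trans hta₂))
      (isGreatest_image_Icc_zero_of_ge hrise.monotoneOn hdip ha₁.le ha₁₂ hgreatest.1.2
        (hrise₂.monotoneOn.mono (Ici_subset_Ici.2 hba₂)) hta₂)

/-- Case 3b of the example (`0 < μ < 1`, `0 < θ < 1`,
`1 − μ < (1−θ)θ^{θ/(1−θ)}`): with `f(s) = 1 − μ + e^{−s} − e^{−θs}` and
`g(t) = ∫₀ᵗ f = 1 − 1/θ + (1−μ)t − e^{−t} + (1/θ)e^{−θt}`, the function `f` has
a smallest zero `a₁ ∈ (0,∞)`, the set `{t ≥ a₁ : g(t) = g(a₁)}` has a largest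
element `a₂`, and the regulator `η(t) = sup_{s∈[0,t]} (g(s))⁺` equals `g` on
`[0,a₁]`, the constant `g(a₁)` on `[a₁,a₂]`, and `g` again on `[a₂,∞)`. -/
theorem example_case3b
    (μ θ : ℝ) (hμ0 : 0 < μ) (hμ1 : μ < 1) (hθ0 : 0 < θ) (hθ1 : θ < 1)
    (hcrit : 1 - μ < (1 - θ) * θ ^ (θ / (1 - θ)))
    (f g η : ℝ → ℝ)
    (hf : ∀ s, f s = 1 - μ + Real.exp (-s) - Real.exp (-θ * s))
    (hg : ∀ t, g t = 1 - 1/θ + (1 - μ) * t - Real.exp (-t) + (1/θ) * Real.exp (-θ * t))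
    (hη : ∀ t, 0 ≤ t → η t = sSup ((fun s => max (g s) 0) '' Set.Icc 0 t)) :
    (∀ t, 0 ≤ t → g t = ∫ s in (0:ℝ)..t, f s) ∧
    ∃ a₁ a₂ : ℝ, 0 < a₁ ∧
      IsLeast {s : ℝ | f s = 0} a₁ ∧
      IsGreatest {t : ℝ | a₁ ≤ t ∧ g t = g a₁} a₂ ∧
      (∀ t, 0 ≤ t → t ≤ a₁ → η t = g t) ∧
      (∀ t, a₁ ≤ t → t ≤ a₂ → η t = g a₁) ∧
      (∀ t, a₂ ≤ t → η t = g t) :=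
  example_case3b_general μ θ hμ1 hθ0 hθ1 hcrit f g η hf hg hη
end

section
/- Let λ ≥ μ > 0, let G : [0,∞) → [0,1] be non-decreasing with G(0) = 0, continuous at 0, and not identically 1 on any neighborhood of 0 (i.e., y_max = inf{x : G(x) = 1} > 0), and let Ḡ₀(x) = 𝒬₀((x,∞)) be the tail of a finite Borel measure 𝒬₀ on [0,∞) with Q(0) := 𝒬₀((0,∞)) > 0. Define H(x,t) = Ḡ₀(x+t) + λ ∫₀ᵗ Ḡ(x+t−s) ds with Ḡ = 1 − G, let ψ(t) = Q(0) + (λ−μ)t, and let φ(t) = ψ(t) − sup_{s∈[0,t]} max(ψ(s) − H(0,s), 0) be the Skorohod-map image of ψ on the domain (−∞, H(0,·)]. Then for every T > 0, δ₁ := min( Q(0), inf_{t∈[0,T]} H(0,t) ) > 0 and φ(t) ≥ δ₁ > 0 for all t ∈ [0,T]. -/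
/-!
The queue `φ = ψ - η` can only be pushed down by the regulator `η`, and since `ψ` is
non-decreasing (`λ ≥ μ`) the regulator up to time `t` is at most `(ψ t - D)⁺`, where
`D = inf_{[0,T]} H(0,·)`; hence `φ t ≥ min (ψ t) D ≥ min (Q(0)) D`. The point is that `D > 0`:
`H(0,t) = Ḡ₀(t) + λ ∫₀ᵗ Ḡ`, and for small `t` the tail `Ḡ₀(t)` is close to `Q(0) > 0` by
continuity of `𝒬₀` from below, while for `t ≥ δ` the integral is at least `δ Ḡ(δ) > 0`
because `Ḡ` is non-increasing and positive near `0`.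
-/

open MeasureTheory Set Filter

theorem exists_gt_forall_le_lt_measure_Ioi (μ : Measure ℝ) {a : ℝ} {c : ENNReal}
    (hc : c < μ (Ioi a)) : ∃ b > a, ∀ t ≤ b, c < μ (Ioi t) := by
  have hunion : (⋃ n : ℕ, Ioi (a + 1 / (n + 1))) = Ioi a := by
    ext x
    simp only [mem_iUnion, mem_Ioi]
    constructor
    · rintro ⟨n, hn⟩
      exact lt_trans (lt_add_of_pos_right a Nat.one_div_pos_of_nat) hn
    · intro hx
      obtain ⟨n, hn⟩ := exists_nat_one_div_lt (sub_pos.2 hx)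
      exact ⟨n, by linarith⟩
  have hmono : Monotone fun n : ℕ => Ioi (a + 1 / ((n : ℝ) + 1)) := fun m n hmn =>
    Ioi_subset_Ioi (add_le_add_right (Nat.one_div_le_one_div hmn) a)
  have hlim := tendsto_measure_iUnion_atTop (μ := μ) hmono
  rw [hunion] at hlim
  obtain ⟨n, hn⟩ := (hlim.eventually (lt_mem_nhds hc)).exists
  exact ⟨a + 1 / (n + 1), lt_add_of_pos_right a Nat.one_div_pos_of_nat,
    fun t ht => hn.trans_le (measure_mono (Ioi_subset_Ioi ht))⟩

theorem exists_gt_forall_mem_Icc_lt_measure_Ioi_toReal (μ : Measure ℝ) {a c : ℝ} (hc0 : 0 ≤ c)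
    (hc : c < (μ (Ioi a)).toReal) : ∃ b > a, ∀ t ∈ Icc a b, c < (μ (Ioi t)).toReal := by
  have hfin : μ (Ioi a) ≠ ⊤ := (ENNReal.toReal_pos_iff.1 (hc0.trans_lt hc)).2.ne
  obtain ⟨b, hab, hb⟩ := exists_gt_forall_le_lt_measure_Ioi μ
    ((ENNReal.ofReal_lt_iff_lt_toReal hc0 hfin).2 hc)
  refine ⟨b, hab, fun t ht => ?_⟩
  have hfin_t : μ (Ioi t) ≠ ⊤ := ne_top_of_le_ne_top hfin (measure_mono (Ioi_subset_Ioi ht.1))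
  exact (ENNReal.ofReal_lt_iff_lt_toReal hc0 hfin_t).1 (hb t ht.2)

theorem AntitoneOn.mul_le_intervalIntegral {f : ℝ → ℝ} {a b t : ℝ} (hf : AntitoneOn f (Ici a))
    (hf0 : ∀ x ∈ Ici a, 0 ≤ f x) (hab : a ≤ b) (hbt : b ≤ t) :
    (b - a) * f b ≤ ∫ x in a..t, f x := by
  have hint : IntervalIntegrable f volume a t :=
    (hf.mono (uIcc_of_le (hab.trans hbt) ▸ Icc_subset_Ici_self)).intervalIntegrable
  calc (b - a) * f b = ∫ _ in a..b, f b := by simp [mul_comm]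
    _ ≤ ∫ x in a..b, f x :=
        intervalIntegral.integral_mono_on hab intervalIntegrable_const
          (hint.mono_set (uIcc_subset_uIcc left_mem_uIcc (mem_uIcc_of_le hab hbt)))
          fun x hx => hf hx.1 hab hx.2
    _ ≤ ∫ x in a..t, f x :=
        intervalIntegral.integral_mono_interval le_rfl hab hbt
          ((ae_restrict_iff' measurableSet_Ioc).2 (Eventually.of_forall fun x hx => hf0 x
            (le_of_lt hx.1))) hint

theorem exists_pos_le_measure_Ioi_toReal_add_integral (μ : Measure ℝ)
    (hμ : 0 < (μ (Ioi 0)).toReal) {lam : ℝ} (hlam : 0 < lam) {f : ℝ → ℝ}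
    (hf : AntitoneOn f (Ici 0)) (hf0 : ∀ x ∈ Ici 0, 0 ≤ f x) {ε : ℝ} (hε : 0 < ε) (hfε : 0 < f ε) :
    ∃ c > 0, ∀ t, 0 ≤ t → c ≤ (μ (Ioi t)).toReal + lam * ∫ x in (0 : ℝ)..t, f x := by
  set q := (μ (Ioi 0)).toReal
  obtain ⟨b, hb, hbq⟩ := exists_gt_forall_mem_Icc_lt_measure_Ioi_toReal μ (half_pos hμ).le
    (half_lt_self hμ)
  set δ := min b ε
  have hδ : 0 < δ := lt_min hb hε
  have hfδ : 0 < f δ := hfε.trans_le (hf hδ.le hε.le (min_le_right b ε))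
  refine ⟨min (q / 2) (lam * (δ * f δ)), lt_min (half_pos hμ) (by positivity), fun t ht => ?_⟩
  have htail : 0 ≤ (μ (Ioi t)).toReal := ENNReal.toReal_nonneg
  rcases le_total t δ with htδ | hδt
  · have hint : 0 ≤ ∫ x in (0 : ℝ)..t, f x :=
      intervalIntegral.integral_nonneg ht fun x hx => hf0 x hx.1
    have := hbq t ⟨ht, htδ.trans (min_le_left b ε)⟩
    have := min_le_left (q / 2) (lam * (δ * f δ))
    have := mul_nonneg hlam.le hint
    linarith
  · have hint := hf.mul_le_intervalIntegral hf0 hδ.le hδt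
    rw [sub_zero] at hint
    have := min_le_right (q / 2) (lam * (δ * f δ))
    have := mul_le_mul_of_nonneg_left hint hlam.le
    linarith

noncomputable def skorohodRegulator (ψ h : ℝ → ℝ) (t : ℝ) : ℝ :=
  sSup ((fun s => max (ψ s - h s) 0) '' Icc 0 t)

theorem skorohodRegulator_le {ψ h : ℝ → ℝ} {t D : ℝ} (hψ : Monotone ψ)
    (hD : ∀ s ∈ Icc 0 t, D ≤ h s) : skorohodRegulator ψ h t ≤ max (ψ t - D) 0 := by
  refine Real.sSup_le ?_ (le_max_right _ _)
  rintro _ ⟨s, hs, rfl⟩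
  have := hψ hs.2
  have := hD s hs
  exact max_le_max (by linarith) le_rfl

theorem min_le_sub_skorohodRegulator {ψ h : ℝ → ℝ} {t D : ℝ} (hψ : Monotone ψ)
    (hD : ∀ s ∈ Icc 0 t, D ≤ h s) : min (ψ t) D ≤ ψ t - skorohodRegulator ψ h t := by
  have := skorohodRegulator_le hψ hD
  grind

theorem fluid_queue_positive_general
    (lam μ : ℝ) (hμ : 0 < μ) (hlm : μ ≤ lam)
    (G : ℝ → ℝ)
    (hGmono : MonotoneOn G (Set.Ici 0))
    (hGrange : ∀ x, 0 ≤ x → G x ∈ Set.Icc (0 : ℝ) 1)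
    (hymax : ∃ ε : ℝ, 0 < ε ∧ G ε < 1)
    (Q0meas : Measure ℝ)
    (G0bar : ℝ → ℝ)
    (hG0bar : ∀ x, G0bar x = (Q0meas (Set.Ioi x)).toReal)
    (hQ0pos : 0 < (Q0meas (Set.Ioi 0)).toReal)
    (H : ℝ → ℝ → ℝ)
    (hH : ∀ x t, 0 ≤ x → 0 ≤ t →
      H x t = G0bar (x + t) + lam * ∫ s in (0:ℝ)..t, (1 - G (x + t - s)))
    (ψ φ : ℝ → ℝ)
    (hψ : ∀ t, ψ t = (Q0meas (Set.Ioi 0)).toReal + (lam - μ) * t)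
    (hφ : ∀ t, 0 ≤ t →
      φ t = ψ t - sSup ((fun s => max (ψ s - H 0 s) 0) '' Set.Icc 0 t)) :
    ∀ T, 0 < T →
      0 < min ((Q0meas (Set.Ioi 0)).toReal) (sInf ((fun t => H 0 t) '' Set.Icc 0 T)) ∧
      ∀ t ∈ Set.Icc (0:ℝ) T,
        min ((Q0meas (Set.Ioi 0)).toReal) (sInf ((fun t => H 0 t) '' Set.Icc 0 T)) ≤ φ t := by
  obtain ⟨ε, hε, hGε⟩ := hymax
  have hH0 : ∀ t, 0 ≤ t →
      H 0 t = (Q0meas (Ioi t)).toReal + lam * ∫ u in (0 : ℝ)..t, (1 - G u) := by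
    intro t ht
    rw [hH 0 t le_rfl ht, hG0bar, zero_add,
      intervalIntegral.integral_comp_sub_left (fun u => 1 - G u), sub_self, sub_zero]
  obtain ⟨c, hc, hcH⟩ := exists_pos_le_measure_Ioi_toReal_add_integral Q0meas hQ0pos
    (hμ.trans_le hlm) (fun x hx y hy hxy => sub_le_sub_left (hGmono hx hy hxy) 1)
    (fun x hx => sub_nonneg.2 (hGrange x hx).2) hε (sub_pos.2 hGε)
  intro T hT
  set D := sInf ((fun t => H 0 t) '' Icc 0 T)
  have hlower : c ∈ lowerBounds ((fun t => H 0 t) '' Icc 0 T) := by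
    rintro _ ⟨t, ht, rfl⟩
    exact (hcH t ht.1).trans_eq (hH0 t ht.1).symm
  have hcD : c ≤ D := le_csInf ((nonempty_Icc.2 hT.le).image _) hlower
  have hDH : ∀ s ∈ Icc 0 T, D ≤ H 0 s := fun s hs => csInf_le ⟨c, hlower⟩ (mem_image_of_mem _ hs)
  have hψmono : Monotone ψ := fun s t hst => by
    rw [hψ, hψ]; nlinarith [sub_nonneg.2 hlm]
  refine ⟨lt_min hQ0pos (hc.trans_le hcD), fun t ht => ?_⟩
  have hQψ : (Q0meas (Ioi 0)).toReal ≤ ψ t := by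
    rw [hψ]; nlinarith [sub_nonneg.2 hlm, ht.1]
  calc min (Q0meas (Ioi 0)).toReal D ≤ min (ψ t) D := min_le_min_right D hQψ
    _ ≤ ψ t - skorohodRegulator ψ (H 0) t :=
        min_le_sub_skorohodRegulator hψmono fun s hs => hDH s ⟨hs.1, hs.2.trans ht.2⟩
    _ = φ t := (hφ t ht.1).symm

/-- In the critical/super-critical case `λ ≥ μ > 0`, the fluid queue length
`φ(t) = ψ(t) − sup_{s∈[0,t]} (ψ(s) − H(0,s))⁺`, with `ψ(t) = Q(0) + (λ−μ)t`,
stays bounded below on every `[0,T]` by the positive constant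
`δ₁ = min(Q(0), inf_{t∈[0,T]} H(0,t))`. Here `G(0) = 0`, `G` is continuous at
`0`, `y_max = inf{x : G(x) = 1} > 0` (witnessed by `∃ ε > 0, G(ε) < 1`), and
`Q(0) = 𝒬₀((0,∞)) > 0`. -/
theorem fluid_queue_positive
    (lam μ : ℝ) (hμ : 0 < μ) (hlm : μ ≤ lam)
    (G : ℝ → ℝ)
    (hGmono : MonotoneOn G (Set.Ici 0))
    (hGrange : ∀ x, 0 ≤ x → G x ∈ Set.Icc (0 : ℝ) 1)
    (hG0 : G 0 = 0)
    (hGcont0 : ContinuousWithinAt G (Set.Ici 0) 0)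
    (hymax : ∃ ε : ℝ, 0 < ε ∧ G ε < 1)
    (Q0meas : Measure ℝ) [IsFiniteMeasure Q0meas]
    (hsupp : Q0meas (Set.Iio 0) = 0)
    (G0bar : ℝ → ℝ)
    (hG0bar : ∀ x, G0bar x = (Q0meas (Set.Ioi x)).toReal)
    (hQ0pos : 0 < (Q0meas (Set.Ioi 0)).toReal)
    (H : ℝ → ℝ → ℝ)
    (hH : ∀ x t, 0 ≤ x → 0 ≤ t →
      H x t = G0bar (x + t) + lam * ∫ s in (0:ℝ)..t, (1 - G (x + t - s)))
    (ψ φ : ℝ → ℝ)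
    (hψ : ∀ t, ψ t = (Q0meas (Set.Ioi 0)).toReal + (lam - μ) * t)
    (hφ : ∀ t, 0 ≤ t →
      φ t = ψ t - sSup ((fun s => max (ψ s - H 0 s) 0) '' Set.Icc 0 t)) :
    ∀ T, 0 < T →
      0 < min ((Q0meas (Set.Ioi 0)).toReal) (sInf ((fun t => H 0 t) '' Set.Icc 0 T)) ∧
      ∀ t ∈ Set.Icc (0:ℝ) T,
        min ((Q0meas (Set.Ioi 0)).toReal) (sInf ((fun t => H 0 t) '' Set.Icc 0 T)) ≤ φ t :=
  fluid_queue_positive_general lam μ hμ hlm G hGmono hGrange hymax Q0meas G0bar hG0bar hQ0pos H hH ψ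
    φ hψ hφ
end
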